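/- In the harmonic algebra setting, for any a₁, a₂ ∈ 𝔷 and any positive integer p, S^r(a₁^p a₂) = sum over pairs (i,j) of nonnegative integers with i+j ≤ p of (-1)^j * r^(p-i) * (1-r)^i * (a₁^i a₂ a₁^j ∗ S(a₁^(p-i-j))), where S = S^1 and r is a polynomial variable. -/

import Mathlib

/-- The `i`-fold circle product `a₁ ∘ a₂ ∘ ⋯` of a nonempty list of elements
(`0` for the empty list, which is never used). -/
def circFold {Z : Type*} [Zero Z] (c : Z → Z → Z) : List Z → Z
  | [] => 0
  | a :: t => t.foldl c a

/-- Iterated circle powers: `circPow c a i = a^{∘(i+1)}`. -/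
def circPow {Z : Type*} (c : Z → Z → Z) (a : Z) : ℕ → Z
  | 0 => a
  | k + 1 => c (circPow c a k) a

/-!
Write `D w = a₁ w + a₁ ∘ w` (`mulLeftAddAct`) and `L w = a₁ w`. Then `S(a₁^m) = D^m 1` and
`S^r(a₁ w) = (r D + (1 - r) L) (S^r w)`, so the left side is `(r D + (1 - r) L)^p a₂`.
The harmonic product satisfies the Leibniz-type rule `(c w) ∗ D u = c (w ∗ D u) + D ((c w) ∗ u)`
(this is where commutativity and associativity of `∘` enter). It makes
`R(x, q) = ∑ⱼ (-1)ʲ (x a₁ʲ) ∗ S(a₁^(q-j))` satisfy `R(c x, q+1) = c R(x, q+1) + D R(c x, q)` and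
`R(1, q+1) = 0`, so `F(i, q) = R(a₁ⁱ a₂, q)` obeys the Pascal recursion
`F(i+1, q+1) = L F(i, q+1) + D F(i+1, q)` with `F(0, 0) = a₂`. Expanding `(r D + (1 - r) L)^p`
along lattice paths then gives `∑_{i+q=p} r^q (1-r)^i F(i, q)`, which is the right side.
-/

open Finset

theorem smul_add_smul_pow_apply_eq_sum_antidiagonal {k M : Type*} [CommSemiring k]
    [AddCommMonoid M] [Module k M] (D L : Module.End k M) (α β : k) (F : ℕ → ℕ → M)
    (hF_left : ∀ q, F 0 (q + 1) = D (F 0 q))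
    (hF_bottom : ∀ i, F (i + 1) 0 = L (F i 0))
    (hF : ∀ i q, F (i + 1) (q + 1) = L (F i (q + 1)) + D (F (i + 1) q)) (p : ℕ) :
    ((α • D + β • L) ^ p) (F 0 0) =
      ∑ x ∈ antidiagonal p, (α ^ x.2 * β ^ x.1) • F x.1 x.2 := by
  induction p with
  | zero => simp
  | succ p ih =>
    -- split each term on the antidiagonal `p + 1` according to the last step (`L` or `D`)
    let viaL : ℕ × ℕ → M
      | (0, _) => 0
      | (i + 1, q) => (α ^ q * β ^ (i + 1)) • L (F i q)
    let viaD : ℕ × ℕ → M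
      | (_, 0) => 0
      | (i, q + 1) => (α ^ (q + 1) * β ^ i) • D (F i q)
    have hsplit : ∀ x ∈ antidiagonal (p + 1),
        (α ^ x.2 * β ^ x.1) • F x.1 x.2 = viaL x + viaD x := by
      rintro ⟨_ | i, _ | q⟩ hx
      · simp at hx
      · simp [viaL, viaD, hF_left]
      · simp [viaL, viaD, hF_bottom]
      · simp [viaL, viaD, hF, smul_add]
    rw [sum_congr rfl hsplit, sum_add_distrib, Nat.sum_antidiagonal_succ,
      Nat.sum_antidiagonal_succ', pow_succ', Module.End.mul_apply, ih, map_sum]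
    simp only [viaL, viaD, zero_add, ← sum_add_distrib]
    refine sum_congr rfl fun x _ => ?_
    simp only [LinearMap.add_apply, LinearMap.smul_apply, map_smul, smul_smul, smul_add]
    rw [add_comm]
    congr 2 <;> ring

section
variable {k Z H : Type*} [CommRing k] [Ring H] [Algebra k H]

def mulLeftAddAct (ι : Z → H) (act : Z → H →ₗ[k] H) (a : Z) : Module.End k H :=
  LinearMap.mulLeft k (ι a) + act a

variable (k) in
/-- The hypotheses on `∗` and `act` only say something on this span, which is all of `𝔥¹`
when `H` is the free algebra. -/
def letterSpan (ι : Z → H) : Submodule k H :=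
  Submodule.span k (insert 1 (Set.range fun bv : Z × H => ι bv.1 * bv.2))

def alternatingStar (ι : Z → H) (astar : H →ₗ[k] H →ₗ[k] H) (S₁ : H → H) (a : Z) (x : H)
    (q : ℕ) : H :=
  ∑ j ∈ range (q + 1), (-1 : k) ^ j • astar (x * ι a ^ j) (S₁ (ι a ^ (q - j)))

variable {ι : Z → H} {circ : Z → Z → Z} {act : Z → H →ₗ[k] H} {astar : H →ₗ[k] H →ₗ[k] H}
  {S₁ : H → H}

theorem mulLeftAddAct_mem_letterSpan (hact_one : ∀ a, act a 1 = 0)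
    (hact_rec : ∀ a b w, act a (ι b * w) = ι (circ a b) * w) (a : Z) {u : H}
    (hu : u ∈ letterSpan k ι) : mulLeftAddAct ι act a u ∈ letterSpan k ι := by
  have hgen : ∀ b v, ι b * v ∈ letterSpan k ι := fun b v =>
    Submodule.subset_span (Set.mem_insert_of_mem _ ⟨(b, v), rfl⟩)
  refine Submodule.add_mem _ (hgen a u) ?_
  suffices letterSpan k ι ≤ (letterSpan k ι).comap (act a) from this hu
  refine Submodule.span_le.2 ?_
  rintro _ (rfl | ⟨⟨b, v⟩, rfl⟩)
  · simp [hact_one]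
  · simpa [hact_rec] using hgen (circ a b) v

theorem astar_mul_mulLeftAddAct (hcomm : ∀ a b, circ a b = circ b a)
    (hassoc : ∀ a b c, circ (circ a b) c = circ a (circ b c))
    (hstar_one_right : ∀ w, astar w 1 = w)
    (hstar_rec : ∀ a b w₁ w₂, astar (ι a * w₁) (ι b * w₂) =
      ι a * astar w₁ (ι b * w₂) + ι b * astar (ι a * w₁) w₂ + ι (circ a b) * astar w₁ w₂)
    (hact_one : ∀ a, act a 1 = 0) (hact_rec : ∀ a b w, act a (ι b * w) = ι (circ a b) * w)
    (a c : Z) (w : H) {u : H} (hu : u ∈ letterSpan k ι) :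
    astar (ι c * w) (mulLeftAddAct ι act a u) =
      ι c * astar w (mulLeftAddAct ι act a u) + mulLeftAddAct ι act a (astar (ι c * w) u) := by
  let D := mulLeftAddAct ι act a
  suffices letterSpan k ι ≤ LinearMap.eqLocus ((astar (ι c * w)).comp D)
      ((LinearMap.mulLeft k (ι c)).comp ((astar w).comp D) + D.comp (astar (ι c * w))) from
    this hu
  have hca : circ c a = circ a c := hcomm c a
  refine Submodule.span_le.2 ?_
  rintro _ (rfl | ⟨⟨b, v⟩, rfl⟩)
  · simpa [D, mulLeftAddAct, hact_one, hact_rec, hstar_one_right, hca, add_assoc] using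
      hstar_rec c a w 1
  · have hcab : circ c (circ a b) = circ a (circ c b) := by rw [← hassoc, hca, hassoc]
    simp only [D, mulLeftAddAct, SetLike.mem_coe, LinearMap.mem_eqLocus, LinearMap.coe_comp,
      Function.comp_apply, LinearMap.add_apply, LinearMap.mulLeft_apply, hact_rec, map_add,
      hstar_rec, mul_add, hca, hcab]
    abel

theorem S₁_pow_succ (hS₁_rec : ∀ b w, S₁ (ι b * w) = ι b * S₁ w + act b (S₁ w)) (a : Z)
    (m : ℕ) : S₁ (ι a ^ (m + 1)) = mulLeftAddAct ι act a (S₁ (ι a ^ m)) := by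
  rw [pow_succ', hS₁_rec]
  rfl

theorem astar_mul_S₁_pow_succ (hcomm : ∀ a b, circ a b = circ b a)
    (hassoc : ∀ a b c, circ (circ a b) c = circ a (circ b c))
    (hstar_one_right : ∀ w, astar w 1 = w)
    (hstar_rec : ∀ a b w₁ w₂, astar (ι a * w₁) (ι b * w₂) =
      ι a * astar w₁ (ι b * w₂) + ι b * astar (ι a * w₁) w₂ + ι (circ a b) * astar w₁ w₂)
    (hact_one : ∀ a, act a 1 = 0) (hact_rec : ∀ a b w, act a (ι b * w) = ι (circ a b) * w)
    (hS₁_one : S₁ 1 = 1) (hS₁_rec : ∀ b w, S₁ (ι b * w) = ι b * S₁ w + act b (S₁ w))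
    (a c : Z) (w : H) (m : ℕ) :
    astar (ι c * w) (S₁ (ι a ^ (m + 1))) =
      ι c * astar w (S₁ (ι a ^ (m + 1))) +
        mulLeftAddAct ι act a (astar (ι c * w) (S₁ (ι a ^ m))) := by
  have hmem : ∀ m, S₁ (ι a ^ m) ∈ letterSpan k ι := by
    intro m
    induction m with
    | zero =>
      rw [pow_zero, hS₁_one]
      exact Submodule.subset_span (Set.mem_insert _ _)
    | succ m ih =>
      rw [S₁_pow_succ hS₁_rec]
      exact mulLeftAddAct_mem_letterSpan hact_one hact_rec a ih
  rw [S₁_pow_succ hS₁_rec]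
  exact astar_mul_mulLeftAddAct hcomm hassoc hstar_one_right hstar_rec hact_one hact_rec a c w
    (hmem m)

theorem alternatingStar_zero (hstar_one_right : ∀ w, astar w 1 = w) (hS₁_one : S₁ 1 = 1)
    (a : Z) (x : H) : alternatingStar ι astar S₁ a x 0 = x := by
  simp [alternatingStar, hS₁_one, hstar_one_right]

theorem alternatingStar_mul_succ (hstar_one_right : ∀ w, astar w 1 = w) (hS₁_one : S₁ 1 = 1)
    (a : Z) (hleib : ∀ c w m, astar (ι c * w) (S₁ (ι a ^ (m + 1))) =
      ι c * astar w (S₁ (ι a ^ (m + 1))) +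
        mulLeftAddAct ι act a (astar (ι c * w) (S₁ (ι a ^ m))))
    (c : Z) (x : H) (q : ℕ) :
    alternatingStar ι astar S₁ a (ι c * x) (q + 1) =
      ι c * alternatingStar ι astar S₁ a x (q + 1) +
        mulLeftAddAct ι act a (alternatingStar ι astar S₁ a (ι c * x) q) := by
  have hterm : ∀ j ∈ range (q + 1),
      (-1 : k) ^ j • astar (ι c * x * ι a ^ j) (S₁ (ι a ^ (q + 1 - j))) =
        ι c * (-1 : k) ^ j • astar (x * ι a ^ j) (S₁ (ι a ^ (q + 1 - j))) +
          mulLeftAddAct ι act a ((-1 : k) ^ j • astar (ι c * x * ι a ^ j) (S₁ (ι a ^ (q - j)))) := by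
    intro j hj
    rw [Nat.sub_add_comm (Nat.le_of_lt_succ (mem_range.1 hj)), mul_assoc, hleib, map_smul,
      mul_smul_comm, smul_add]
  rw [alternatingStar, sum_range_succ, sum_congr rfl hterm, sum_add_distrib, alternatingStar,
    alternatingStar, sum_range_succ _ (q + 1), mul_add, mul_sum, map_sum]
  simp only [Nat.sub_self, pow_zero, hS₁_one, hstar_one_right, mul_smul_comm, mul_assoc]
  abel

theorem alternatingStar_one_succ (hstar_one_left : ∀ w, astar 1 w = w) (a : Z) (q : ℕ) :
    alternatingStar ι astar S₁ a 1 (q + 1) =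
      S₁ (ι a ^ (q + 1)) - alternatingStar ι astar S₁ a (ι a) q := by
  rw [alternatingStar, sum_range_succ', alternatingStar, sub_eq_neg_add, ← sum_neg_distrib]
  simp [pow_succ', hstar_one_left]

theorem alternatingStar_letter (hstar_one_left : ∀ w, astar 1 w = w)
    (hstar_one_right : ∀ w, astar w 1 = w) (hact_one : ∀ a, act a 1 = 0) (hS₁_one : S₁ 1 = 1)
    (hS₁_rec : ∀ b w, S₁ (ι b * w) = ι b * S₁ w + act b (S₁ w)) (a : Z)
    (hleib : ∀ c w m, astar (ι c * w) (S₁ (ι a ^ (m + 1))) =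
      ι c * astar w (S₁ (ι a ^ (m + 1))) +
        mulLeftAddAct ι act a (astar (ι c * w) (S₁ (ι a ^ m))))
    (q : ℕ) : alternatingStar ι astar S₁ a (ι a) q = S₁ (ι a ^ (q + 1)) := by
  induction q with
  | zero =>
    rw [alternatingStar_zero hstar_one_right hS₁_one, S₁_pow_succ hS₁_rec, pow_zero, hS₁_one]
    simp [mulLeftAddAct, hact_one]
  | succ q ih =>
    have h := alternatingStar_mul_succ hstar_one_right hS₁_one a hleib a 1 q
    rw [mul_one, alternatingStar_one_succ hstar_one_left, ih, sub_self, mul_zero, zero_add] at h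
    exact h.trans (S₁_pow_succ hS₁_rec a (q + 1)).symm

theorem pow_apply_eq_sum_alternatingStar (hstar_one_left : ∀ w, astar 1 w = w)
    (hstar_one_right : ∀ w, astar w 1 = w) (hact_one : ∀ a, act a 1 = 0) (hS₁_one : S₁ 1 = 1)
    (hS₁_rec : ∀ b w, S₁ (ι b * w) = ι b * S₁ w + act b (S₁ w)) (a : Z)
    (hleib : ∀ c w m, astar (ι c * w) (S₁ (ι a ^ (m + 1))) =
      ι c * astar w (S₁ (ι a ^ (m + 1))) +
        mulLeftAddAct ι act a (astar (ι c * w) (S₁ (ι a ^ m))))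
    (α β : k) (b : Z) (p : ℕ) :
    ((α • mulLeftAddAct ι act a + β • LinearMap.mulLeft k (ι a)) ^ p) (ι b) =
      ∑ x ∈ antidiagonal p,
        (α ^ x.2 * β ^ x.1) • alternatingStar ι astar S₁ a (ι a ^ x.1 * ι b) x.2 := by
  have hmul_succ := alternatingStar_mul_succ hstar_one_right hS₁_one a hleib
  have hzero := alternatingStar_zero (ι := ι) hstar_one_right hS₁_one a
  have hstart : alternatingStar ι astar S₁ a (ι a ^ 0 * ι b) 0 = ι b := by
    rw [hzero, pow_zero, one_mul]
  conv_lhs => rw [← hstart]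
  refine smul_add_smul_pow_apply_eq_sum_antidiagonal _ _ _ _
    (fun i q => alternatingStar ι astar S₁ a (ι a ^ i * ι b) q) (fun q => ?_) (fun i => ?_)
    (fun i q => ?_) p
  · rw [pow_zero, one_mul, ← mul_one (ι b), hmul_succ, alternatingStar_one_succ hstar_one_left,
      alternatingStar_letter hstar_one_left hstar_one_right hact_one hS₁_one hS₁_rec a hleib,
      sub_self, mul_zero, zero_add]
  · simp [hzero, pow_succ', mul_assoc]
  · rw [pow_succ', mul_assoc, hmul_succ]
    rfl

theorem apply_pow_mul_eq_pow_apply {Sr : H → H} {r : k}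
    (hSr_rec : ∀ b w, Sr (ι b * w) = ι b * Sr w + r • act b (Sr w)) (a : Z) (x : H) (p : ℕ) :
    Sr (ι a ^ p * x) =
      ((r • mulLeftAddAct ι act a + (1 - r) • LinearMap.mulLeft k (ι a)) ^ p) (Sr x) := by
  induction p with
  | zero => simp
  | succ p ih =>
    rw [pow_succ', mul_assoc, hSr_rec, ih, pow_succ', Module.End.mul_apply]
    simp only [LinearMap.add_apply, LinearMap.smul_apply, mulLeftAddAct, LinearMap.mulLeft_apply]
    module
end

theorem Sr_pow_mul_right_general
    {Z H : Type*} [AddCommGroup Z] [Module ℚ Z] [Ring H] [Algebra ℚ H]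
    (ι : Z →ₗ[ℚ] H)
    (circ : Z →ₗ[ℚ] Z →ₗ[ℚ] Z)
    (hcomm : ∀ a b : Z, circ a b = circ b a)
    (hassoc : ∀ a b c : Z, circ (circ a b) c = circ a (circ b c))
    (astar : H →ₗ[ℚ] H →ₗ[ℚ] H)
    (hstar_one_left : ∀ w : H, astar 1 w = w)
    (hstar_one_right : ∀ w : H, astar w 1 = w)
    (hstar_rec : ∀ (a b : Z) (w₁ w₂ : H),
      astar (ι a * w₁) (ι b * w₂) =
        ι a * astar w₁ (ι b * w₂) + ι b * astar (ι a * w₁) w₂ + ι (circ a b) * astar w₁ w₂)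
    (act : Z →ₗ[ℚ] H →ₗ[ℚ] H)
    (hact_one : ∀ a : Z, act a 1 = 0)
    (hact_rec : ∀ (a b : Z) (w : H), act a (ι b * w) = ι (circ a b) * w)
    (S : ℚ → H →ₗ[ℚ] H)
    (hS_one : ∀ r : ℚ, S r 1 = 1)
    (hS_rec : ∀ (r : ℚ) (a : Z) (w : H), S r (ι a * w) = ι a * S r w + r • act a (S r w))
    (r : ℚ) (a₁ a₂ : Z) (p : ℕ) :
    S r ((ι a₁) ^ p * ι a₂) =
      ∑ i ∈ Finset.range (p + 1), ∑ j ∈ Finset.range (p + 1 - i),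
        ((-1 : ℚ) ^ j * r ^ (p - i) * (1 - r) ^ i) •
          astar ((ι a₁) ^ i * ι a₂ * (ι a₁) ^ j) (S 1 ((ι a₁) ^ (p - i - j))) := by
  have hS₁_rec : ∀ b w, S 1 (ι b * w) = ι b * S 1 w + act b (S 1 w) := fun b w => by
    rw [hS_rec, one_smul]
  have hleib := astar_mul_S₁_pow_succ (circ := fun a b => circ a b) hcomm hassoc
    hstar_one_right hstar_rec hact_one hact_rec (hS_one 1) hS₁_rec a₁
  have hSr_letter : S r (ι a₂) = ι a₂ := by
    simpa [hS_one, hact_one] using hS_rec r a₂ 1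
  rw [apply_pow_mul_eq_pow_apply (hS_rec r), hSr_letter, pow_apply_eq_sum_alternatingStar
    hstar_one_left hstar_one_right hact_one (hS_one 1) hS₁_rec a₁ hleib,
    Nat.sum_antidiagonal_eq_sum_range_succ_mk]
  refine sum_congr rfl fun i hi => ?_
  rw [alternatingStar, smul_sum, Nat.sub_add_comm (mem_range_succ_iff.1 hi)]
  refine sum_congr rfl fun j _ => ?_
  rw [smul_smul, mul_comm, ← mul_assoc]

theorem Sr_pow_mul_right
    {Z H : Type*} [AddCommGroup Z] [Module ℚ Z] [Ring H] [Algebra ℚ H]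
    (ι : Z →ₗ[ℚ] H)
    (circ : Z →ₗ[ℚ] Z →ₗ[ℚ] Z)
    (hcomm : ∀ a b : Z, circ a b = circ b a)
    (hassoc : ∀ a b c : Z, circ (circ a b) c = circ a (circ b c))
    (astar : H →ₗ[ℚ] H →ₗ[ℚ] H)
    (hstar_one_left : ∀ w : H, astar 1 w = w)
    (hstar_one_right : ∀ w : H, astar w 1 = w)
    (hstar_rec : ∀ (a b : Z) (w₁ w₂ : H),
      astar (ι a * w₁) (ι b * w₂) =
        ι a * astar w₁ (ι b * w₂) + ι b * astar (ι a * w₁) w₂ + ι (circ a b) * astar w₁ w₂)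
    (act : Z →ₗ[ℚ] H →ₗ[ℚ] H)
    (hact_one : ∀ a : Z, act a 1 = 0)
    (hact_rec : ∀ (a b : Z) (w : H), act a (ι b * w) = ι (circ a b) * w)
    (S : ℚ → H →ₗ[ℚ] H)
    (hS_one : ∀ r : ℚ, S r 1 = 1)
    (hS_rec : ∀ (r : ℚ) (a : Z) (w : H), S r (ι a * w) = ι a * S r w + r • act a (S r w))
    (r : ℚ) (a₁ a₂ : Z) (p : ℕ) (hp : 1 ≤ p) :
    S r ((ι a₁) ^ p * ι a₂) =
      ∑ i ∈ Finset.range (p + 1), ∑ j ∈ Finset.range (p + 1 - i),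
        ((-1 : ℚ) ^ j * r ^ (p - i) * (1 - r) ^ i) •
          astar ((ι a₁) ^ i * ι a₂ * (ι a₁) ^ j) (S 1 ((ι a₁) ^ (p - i - j))) :=
  Sr_pow_mul_right_general ι circ hcomm hassoc astar hstar_one_left hstar_one_right hstar_rec act
    hact_one hact_rec S hS_one hS_rec r a₁ a₂ p
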